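/- arXiv:2204.11526 — 5 statements merged into one kernel-verified Lean document; each statement's English description precedes it below -/
import Mathlib

section
/- Let M ∈ ℝ_{≥0}^{R1×R2} be a cost matrix, ε > 0, and let μ ∈ P_{R1}, ν ∈ P_{R2} be probability vectors with strictly positive entries. Then strong duality holds for entropy-regularized optimal transport: min_{T ∈ Π(μ,ν)} ⟨T,M⟩ − ε H(T) = max_{α ∈ ℝ^{R1}, β ∈ ℝ^{R2}} αᵀμ + βᵀν − ε Σ_{m,n} exp((α_m + β_n − M_{mn})/ε), and the maximum on the right-hand side is attained. -/
noncomputable section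

open Finset

/-- The probability simplex in `ℝ^R`. -/
def probSimplex (R : ℕ) : Set (Fin R → ℝ) :=
  {p | (∀ r, 0 ≤ p r) ∧ ∑ r, p r = 1}

/-- The transport polytope `Π(μ, ν)`. -/
def transportPolytope {R1 R2 : ℕ} (μ : Fin R1 → ℝ) (ν : Fin R2 → ℝ) :
    Set (Matrix (Fin R1) (Fin R2) ℝ) :=
  {T | (∀ m n, 0 ≤ T m n) ∧ (∀ m, ∑ n, T m n = μ m) ∧ (∀ n, ∑ m, T m n = ν n)}

/-- The entropy `H(T) = -∑ T_{mn} (log T_{mn} - 1)` (with `0 log 0 = 0`,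
which is Mathlib's convention since `Real.log 0 = 0`). -/
def entropyH {R1 R2 : ℕ} (T : Matrix (Fin R1) (Fin R2) ℝ) : ℝ :=
  -∑ m, ∑ n, T m n * (Real.log (T m n) - 1)

/-- The entropy-regularized transport objective `⟨T, M⟩ - ε H(T)`. -/
def otObj {R1 R2 : ℕ} (M : Matrix (Fin R1) (Fin R2) ℝ) (ε : ℝ)
    (T : Matrix (Fin R1) (Fin R2) ℝ) : ℝ :=
  (∑ m, ∑ n, T m n * M m n) - ε * entropyH T

/-- The dual objective `αᵀμ + βᵀν - ε ∑_{m,n} exp((α_m + β_n - M_{mn})/ε)`. -/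
def dualObj {R1 R2 : ℕ} (M : Matrix (Fin R1) (Fin R2) ℝ) (ε : ℝ)
    (μ : Fin R1 → ℝ) (ν : Fin R2 → ℝ) (α : Fin R1 → ℝ) (β : Fin R2 → ℝ) : ℝ :=
  (∑ m, α m * μ m) + (∑ n, β n * ν n)
    - ε * ∑ m, ∑ n, Real.exp ((α m + β n - M m n) / ε)

/-!
Entrywise, weak duality is the Fenchel–Young inequality `t * s - exp s ≤ t * (log t - 1)`
(for `t ≥ 0`), with equality exactly when `t = exp s`. Hence, as soon as the Gibbs plan
`exp ((α m + β n - M m n) / ε)` of some potentials `(α, β)` lies in `Π(μ, ν)`, it is a primal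
minimizer, `(α, β)` is a dual maximizer, and the two values agree.

Such potentials exist. The dual objective is invariant under `(α, β) ↦ (α - c, β + c)`, and since
every weight `μ m * ν n` is positive it tends to `-∞` as soon as one of the sums `α m + β n` is
unbounded; after normalizing one coordinate of `α` its superlevel sets are therefore compact and
it attains its maximum. At a maximizer the derivative along every line vanishes, and these
first-order conditions are exactly the marginal constraints of the Gibbs plan.
-/

open Real

theorem mul_sub_exp_le_mul_log_sub_one {t : ℝ} (ht : 0 ≤ t) (s : ℝ) :
    t * s - exp s ≤ t * (log t - 1) := by
  rcases ht.eq_or_lt with rfl | ht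
  · simpa using (exp_pos s).le
  · -- `exp (s - log t) ≥ 1 + (s - log t)`, multiplied by `t`
    have h := mul_le_mul_of_nonneg_left (add_one_le_exp (s - log t)) ht.le
    rw [exp_sub, exp_log ht, mul_div_cancel₀ _ ht.ne'] at h
    linarith

theorem mul_sub_mul_exp_div_le {ε t : ℝ} (hε : 0 < ε) (ht : 0 ≤ t) (x a : ℝ) :
    t * x - ε * exp ((x - a) / ε) ≤ t * a + ε * (t * (log t - 1)) := by
  have h := mul_le_mul_of_nonneg_left (mul_sub_exp_le_mul_log_sub_one ht ((x - a) / ε)) hε.le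
  have hx : ε * (t * ((x - a) / ε)) = t * x - t * a := by field_simp
  rw [mul_sub, hx] at h
  linarith

theorem mul_sub_mul_exp_div_eq_of_eq_exp {ε t : ℝ} (hε : ε ≠ 0) {x a : ℝ}
    (ht : t = exp ((x - a) / ε)) :
    t * x - ε * exp ((x - a) / ε) = t * a + ε * (t * (log t - 1)) := by
  rw [← ht, ht, log_exp]
  field_simp
  ring

section EntropicDuality

variable {R1 R2 : ℕ} (M : Matrix (Fin R1) (Fin R2) ℝ) (ε : ℝ) (μ : Fin R1 → ℝ) (ν : Fin R2 → ℝ)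

def gibbsPlan (α : Fin R1 → ℝ) (β : Fin R2 → ℝ) : Matrix (Fin R1) (Fin R2) ℝ :=
  Matrix.of fun m n => exp ((α m + β n - M m n) / ε)

variable {M ε μ ν}

theorem sum_mul_add_sum_mul_eq_of_mem_transportPolytope {T : Matrix (Fin R1) (Fin R2) ℝ}
    (hT : T ∈ transportPolytope μ ν) (α : Fin R1 → ℝ) (β : Fin R2 → ℝ) :
    (∑ m, α m * μ m) + (∑ n, β n * ν n) = ∑ m, ∑ n, T m n * (α m + β n) := by
  obtain ⟨-, hrow, hcol⟩ := hT
  simp only [mul_add, sum_add_distrib, ← hrow, ← hcol, mul_comm (α _)]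
  rw [sum_comm (f := fun m n => T m n * β n)]
  simp only [sum_mul, mul_comm (β _)]

theorem otObj_eq_sum (T : Matrix (Fin R1) (Fin R2) ℝ) :
    otObj M ε T = ∑ m, ∑ n, (T m n * M m n + ε * (T m n * (log (T m n) - 1))) := by
  simp only [otObj, entropyH, sum_add_distrib, ← mul_sum]
  ring

theorem dualObj_eq_sum_of_mem_transportPolytope {T : Matrix (Fin R1) (Fin R2) ℝ}
    (hT : T ∈ transportPolytope μ ν) (α : Fin R1 → ℝ) (β : Fin R2 → ℝ) :
    dualObj M ε μ ν α β =
      ∑ m, ∑ n, (T m n * (α m + β n) - ε * exp ((α m + β n - M m n) / ε)) := by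
  simp only [dualObj, sum_mul_add_sum_mul_eq_of_mem_transportPolytope hT, sum_sub_distrib,
    mul_sum]

theorem dualObj_le_otObj (hε : 0 < ε) {T : Matrix (Fin R1) (Fin R2) ℝ}
    (hT : T ∈ transportPolytope μ ν) (α : Fin R1 → ℝ) (β : Fin R2 → ℝ) :
    dualObj M ε μ ν α β ≤ otObj M ε T := by
  rw [dualObj_eq_sum_of_mem_transportPolytope hT, otObj_eq_sum]
  gcongr with m _ n _
  exact mul_sub_mul_exp_div_le hε (hT.1 m n) _ _

theorem otObj_gibbsPlan (hε : ε ≠ 0) {α : Fin R1 → ℝ} {β : Fin R2 → ℝ}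
    (hG : gibbsPlan M ε α β ∈ transportPolytope μ ν) :
    otObj M ε (gibbsPlan M ε α β) = dualObj M ε μ ν α β := by
  rw [dualObj_eq_sum_of_mem_transportPolytope hG, otObj_eq_sum]
  refine sum_congr rfl fun m _ => sum_congr rfl fun n _ => ?_
  exact (mul_sub_mul_exp_div_eq_of_eq_exp hε rfl).symm

theorem strongDuality_of_gibbsPlan_mem (hε : 0 < ε) {α : Fin R1 → ℝ} {β : Fin R2 → ℝ}
    (hG : gibbsPlan M ε α β ∈ transportPolytope μ ν) :
    (∀ α' β', dualObj M ε μ ν α' β' ≤ dualObj M ε μ ν α β) ∧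
      IsLeast {c | ∃ T ∈ transportPolytope μ ν, c = otObj M ε T} (dualObj M ε μ ν α β) := by
  refine ⟨fun α' β' => ?_, ⟨_, hG, (otObj_gibbsPlan hε.ne' hG).symm⟩, ?_⟩
  · exact (otObj_gibbsPlan hε.ne' hG) ▸ dualObj_le_otObj hε hG α' β'
  · rintro _ ⟨T, hT, rfl⟩
    exact dualObj_le_otObj hε hT α β

theorem vecMulVec_mem_transportPolytope (hμ : μ ∈ probSimplex R1) (hν : ν ∈ probSimplex R2) :
    Matrix.vecMulVec μ ν ∈ transportPolytope μ ν := by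
  refine ⟨fun m n => mul_nonneg (hμ.1 m) (hν.1 n), fun m => ?_, fun n => ?_⟩
  · simp only [Matrix.vecMulVec_apply, ← mul_sum, hν.2, mul_one]
  · simp only [Matrix.vecMulVec_apply, ← sum_mul, hμ.2, one_mul]

theorem exists_mul_sub_mul_exp_div_add_abs_le (hε : 0 < ε) {w : ℝ} (hw : 0 ≤ w) (a : ℝ) :
    ∃ K, ∀ x, w * x - ε * exp ((x - a) / ε) + w * |x| ≤ K := by
  refine ⟨max 0 (2 * w * a + ε * (2 * w * (log (2 * w) - 1))), fun x => ?_⟩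
  rcases le_total x 0 with hx | hx
  · have := (exp_pos ((x - a) / ε)).le
    rw [abs_of_nonpos hx]
    nlinarith [le_max_left 0 (2 * w * a + ε * (2 * w * (log (2 * w) - 1)))]
  · have := mul_sub_mul_exp_div_le hε (by positivity : 0 ≤ 2 * w) x a
    rw [abs_of_nonneg hx]
    linarith [le_max_right 0 (2 * w * a + ε * (2 * w * (log (2 * w) - 1)))]

theorem exists_forall_mul_abs_add_le_sub_dualObj (hε : 0 < ε) (hμ : μ ∈ probSimplex R1)
    (hν : ν ∈ probSimplex R2) :
    ∃ C, ∀ α β m n, μ m * ν n * |α m + β n| ≤ C - dualObj M ε μ ν α β := by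
  choose K hK using fun m n =>
    exists_mul_sub_mul_exp_div_add_abs_le hε (mul_nonneg (hμ.1 m) (hν.1 n)) (M m n)
  refine ⟨∑ m, ∑ n, K m n, fun α β m n => ?_⟩
  set W : Fin R1 → Fin R2 → ℝ := fun m n => μ m * ν n * |α m + β n|
  have hW0 : ∀ m n, 0 ≤ W m n := fun m n => by have := hμ.1 m; have := hν.1 n; positivity
  have hW : W m n ≤ ∑ m, ∑ n, W m n :=
    (single_le_sum (fun n _ => hW0 m n) (mem_univ n)).trans
      (single_le_sum (f := fun m => ∑ n, W m n)
        (fun m _ => sum_nonneg fun n _ => hW0 m n) (mem_univ m))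
  have hdual : dualObj M ε μ ν α β + ∑ m, ∑ n, W m n ≤ ∑ m, ∑ n, K m n := by
    rw [dualObj_eq_sum_of_mem_transportPolytope (vecMulVec_mem_transportPolytope hμ hν),
      ← sum_add_distrib]
    gcongr with m _
    rw [← sum_add_distrib]
    gcongr with n _
    exact hK m n (α m + β n)
  linarith

theorem dualObj_sub_const_add_const (hμ : ∑ m, μ m = 1) (hν : ∑ n, ν n = 1)
    (α : Fin R1 → ℝ) (β : Fin R2 → ℝ) (c : ℝ) :
    dualObj M ε μ ν (fun m => α m - c) (fun n => β n + c) = dualObj M ε μ ν α β := by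
  simp only [dualObj, sub_mul, add_mul, sum_sub_distrib, sum_add_distrib, ← mul_sum, hμ, hν,
    sub_add_add_cancel]

theorem continuous_dualObj :
    Continuous fun p : (Fin R1 → ℝ) × (Fin R2 → ℝ) => dualObj M ε μ ν p.1 p.2 := by
  unfold dualObj
  fun_prop

theorem isCompact_setOf_le_dualObj (hε : 0 < ε) (hμ : μ ∈ probSimplex R1)
    (hν : ν ∈ probSimplex R2) (hμpos : ∀ m, 0 < μ m) (hνpos : ∀ n, 0 < ν n)
    [Nonempty (Fin R2)] (L : ℝ) (m0 : Fin R1) :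
    IsCompact {p : (Fin R1 → ℝ) × (Fin R2 → ℝ) | L ≤ dualObj M ε μ ν p.1 p.2 ∧ p.1 m0 = 0} := by
  obtain ⟨C, hC⟩ := exists_forall_mul_abs_add_le_sub_dualObj (M := M) hε hμ hν
  obtain ⟨n0⟩ := ‹Nonempty (Fin R2)›
  set r : Fin R1 → Fin R2 → ℝ := fun m n => (C - L) / (μ m * ν n)
  have hr : ∀ α β, L ≤ dualObj M ε μ ν α β → ∀ m n, |α m + β n| ≤ r m n := fun α β hL m n => by
    rw [le_div_iff₀ (mul_pos (hμpos m) (hνpos n)), mul_comm]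
    linarith [hC α β m n]
  refine ((isCompact_univ_pi fun m => isCompact_Icc (a := -(r m n0 + r m0 n0))
    (b := r m n0 + r m0 n0)).prod (isCompact_univ_pi fun n => isCompact_Icc (a := -r m0 n)
    (b := r m0 n))).of_isClosed_subset ?_ ?_
  · exact (isClosed_le continuous_const continuous_dualObj).inter
      (isClosed_eq ((continuous_apply m0).comp continuous_fst) continuous_const)
  · rintro ⟨α, β⟩ ⟨hL, hα0 : α m0 = 0⟩
    -- `α m0 = 0` turns the bounds on `α m + β n` into bounds on `β`, and then on `α`
    have hβ : ∀ n, |β n| ≤ r m0 n := fun n => by simpa [hα0] using hr α β hL m0 n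
    have hα : ∀ m, |α m| ≤ r m n0 + r m0 n0 := fun m =>
      calc |α m| = |(α m + β n0) - β n0| := by rw [add_sub_cancel_right]
        _ ≤ |α m + β n0| + |β n0| := abs_sub _ _
        _ ≤ r m n0 + r m0 n0 := add_le_add (hr α β hL m n0) (hβ n0)
    simp only [Set.mem_prod, Set.mem_univ_pi, Set.mem_Icc, ← abs_le]
    exact ⟨hα, hβ⟩

theorem nonempty_of_mem_probSimplex {R : ℕ} {p : Fin R → ℝ} (hp : p ∈ probSimplex R) :
    Nonempty (Fin R) :=
  univ_nonempty_iff.mp (nonempty_of_sum_ne_zero (hp.2 ▸ one_ne_zero))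

theorem exists_forall_dualObj_le (hε : 0 < ε) (hμ : μ ∈ probSimplex R1)
    (hν : ν ∈ probSimplex R2) (hμpos : ∀ m, 0 < μ m) (hνpos : ∀ n, 0 < ν n) :
    ∃ α β, ∀ α' β', dualObj M ε μ ν α' β' ≤ dualObj M ε μ ν α β := by
  obtain ⟨m0⟩ := nonempty_of_mem_probSimplex hμ
  have := nonempty_of_mem_probSimplex hν
  set L := dualObj M ε μ ν 0 0
  obtain ⟨⟨α, β⟩, -, hmax⟩ := (isCompact_setOf_le_dualObj hε hμ hν hμpos hνpos L m0).exists_isMaxOn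
    ⟨(0, 0), le_rfl, rfl⟩ (f := fun p => dualObj M ε μ ν p.1 p.2) continuous_dualObj.continuousOn
  refine ⟨α, β, fun α' β' => ?_⟩
  replace hmax := isMaxOn_iff.mp hmax
  rw [← dualObj_sub_const_add_const hμ.2 hν.2 α' β' (α' m0)]
  by_cases hL : L ≤ dualObj M ε μ ν (fun m => α' m - α' m0) (fun n => β' n + α' m0)
  · exact hmax (_, _) ⟨hL, sub_self _⟩
  · exact (not_le.mp hL).le.trans (hmax (0, 0) ⟨le_rfl, rfl⟩)

theorem hasDerivAt_dualObj_line (hε : ε ≠ 0) (α v : Fin R1 → ℝ) (β w : Fin R2 → ℝ) :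
    HasDerivAt (fun t : ℝ => dualObj M ε μ ν (α + t • v) (β + t • w))
      ((∑ m, v m * μ m) + (∑ n, w n * ν n)
        - ∑ m, ∑ n, (v m + w n) * gibbsPlan M ε α β m n) 0 := by
  have hlin : ∀ (a b c : ℝ), HasDerivAt (fun t : ℝ => (a + t * b) * c) (b * c) 0 := fun a b c => by
    simpa using ((hasDerivAt_mul_const (x := 0) b).const_add a).mul_const c
  have hexp : ∀ m n, HasDerivAt
      (fun t : ℝ => exp ((α m + t * v m + (β n + t * w n) - M m n) / ε))
      ((v m + w n) / ε * gibbsPlan M ε α β m n) 0 := fun m n => by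
    have h := (((hasDerivAt_mul_const (x := 0) (v m + w n)).const_add
      (α m + β n - M m n)).div_const ε).exp
    convert h using 1
    · ext t; congr 1; ring
    · simp [gibbsPlan, mul_comm]
  have h := ((HasDerivAt.fun_sum (u := univ) fun m _ => hlin (α m) (v m) (μ m)).fun_add
    (HasDerivAt.fun_sum (u := univ) fun n _ => hlin (β n) (w n) (ν n))).fun_sub
    ((HasDerivAt.fun_sum (u := univ) fun m _ =>
      HasDerivAt.fun_sum (u := univ) fun n _ => hexp m n).const_mul ε)
  simp only [dualObj, Pi.add_apply, Pi.smul_apply, smul_eq_mul]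
  refine h.congr_deriv ?_
  simp only [mul_sum, ← mul_assoc, mul_div_cancel₀ _ hε]

theorem gibbsPlan_mem_transportPolytope_of_forall_dualObj_le (hε : ε ≠ 0)
    {α : Fin R1 → ℝ} {β : Fin R2 → ℝ}
    (hmax : ∀ α' β', dualObj M ε μ ν α' β' ≤ dualObj M ε μ ν α β) :
    gibbsPlan M ε α β ∈ transportPolytope μ ν := by
  have hcrit : ∀ (v : Fin R1 → ℝ) (w : Fin R2 → ℝ), (∑ m, v m * μ m) + (∑ n, w n * ν n)
      - ∑ m, ∑ n, (v m + w n) * gibbsPlan M ε α β m n = 0 := fun v w =>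
    IsLocalMax.hasDerivAt_eq_zero
      (Filter.Eventually.of_forall fun t => by simpa using hmax (α + t • v) (β + t • w))
      (hasDerivAt_dualObj_line hε α v β w)
  refine ⟨fun m n => (exp_pos _).le, fun m => ?_, fun n => ?_⟩
  · have h := hcrit (Pi.single m 1) 0
    simp only [Pi.single_apply, ite_mul, one_mul, zero_mul, sum_ite_eq', mem_univ, if_true,
      Pi.zero_apply, sum_const_zero, add_zero, sum_ite_irrel] at h
    linarith
  · have h := hcrit 0 (Pi.single n 1)
    simp only [Pi.zero_apply, zero_mul, sum_const_zero, Pi.single_apply, ite_mul, one_mul,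
      sum_ite_eq', mem_univ, if_true, zero_add] at h
    linarith

end EntropicDuality

theorem entropic_ot_strong_duality_general {R1 R2 : ℕ}
    (M : Matrix (Fin R1) (Fin R2) ℝ)
    (ε : ℝ) (hε : 0 < ε)
    (μ : Fin R1 → ℝ) (ν : Fin R2 → ℝ)
    (hμ : μ ∈ probSimplex R1) (hν : ν ∈ probSimplex R2)
    (hμpos : ∀ m, 0 < μ m) (hνpos : ∀ n, 0 < ν n) :
    ∃ (α : Fin R1 → ℝ) (β : Fin R2 → ℝ),
      (∀ (α' : Fin R1 → ℝ) (β' : Fin R2 → ℝ),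
        dualObj M ε μ ν α' β' ≤ dualObj M ε μ ν α β) ∧
      IsLeast {c | ∃ T ∈ transportPolytope μ ν, c = otObj M ε T}
        (dualObj M ε μ ν α β) := by
  obtain ⟨α, β, hmax⟩ := exists_forall_dualObj_le (M := M) hε hμ hν hμpos hνpos
  exact ⟨α, β, strongDuality_of_gibbsPlan_mem hε
    (gibbsPlan_mem_transportPolytope_of_forall_dualObj_le hε.ne' hmax)⟩

/-- Strong duality for entropy-regularized optimal transport: the maximum of the
dual objective is attained, and this maximum value is also the minimum of the primal
objective `⟨T, M⟩ - ε H(T)` over the transport polytope (attained as well). -/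
theorem entropic_ot_strong_duality {R1 R2 : ℕ}
    (M : Matrix (Fin R1) (Fin R2) ℝ) (hM : ∀ m n, 0 ≤ M m n)
    (ε : ℝ) (hε : 0 < ε)
    (μ : Fin R1 → ℝ) (ν : Fin R2 → ℝ)
    (hμ : μ ∈ probSimplex R1) (hν : ν ∈ probSimplex R2)
    (hμpos : ∀ m, 0 < μ m) (hνpos : ∀ n, 0 < ν n) :
    ∃ (α : Fin R1 → ℝ) (β : Fin R2 → ℝ),
      (∀ (α' : Fin R1 → ℝ) (β' : Fin R2 → ℝ),
        dualObj M ε μ ν α' β' ≤ dualObj M ε μ ν α β) ∧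
      IsLeast {c | ∃ T ∈ transportPolytope μ ν, c = otObj M ε T}
        (dualObj M ε μ ν α β) :=
  entropic_ot_strong_duality_general M ε hε μ ν hμ hν hμpos hνpos
end
end

section
/- Let M ∈ ℝ_{≥0}^{R1×R2}, ε > 0, K = exp(−M/ε) (entrywise), and let μ ∈ P_{R1}, ν ∈ P_{R2} have strictly positive entries. Then the unique minimizer T*_ε of ⟨T,M⟩ − ε H(T) over Π(μ,ν) has the scaling form T*_ε = diag(u) K diag(v) for some entrywise positive vectors u ∈ ℝ_{>0}^{R1} and v ∈ ℝ_{>0}^{R2}. -/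
noncomputable section

open Finset

/-!
Moving mass `t > 0` around a cycle `(m, n), (m', n')` up and `(m, n'), (m', n)` down keeps a plan
in `Π(μ, ν)`. By convexity of `x ↦ x (log x - 1)` this changes the objective by at most `t` times
the alternating sum of the gradient `M + ε log T` around the cycle, taken at the new plan, so at a
minimizer that sum is nonnegative for all small `t`. If `T m n = 0`, positivity of the marginals
provides such a cycle through `(m, n)`, whose sum contains `ε log t → -∞`; hence `T > 0`. Letting
`t → 0` for both orientations of each cycle then shows that all alternating sums of `M + ε log T`
vanish, i.e. `M m n + ε log T m n = a m + b n`, which is the scaling form with `u = exp (a / ε)`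
and `v = exp (b / ε)`.
-/

open Filter Topology

lemma mul_log_sub_one_sub_le {x y : ℝ} (hx : 0 ≤ x) (hy : 0 < y) :
    y * (Real.log y - 1) - x * (Real.log x - 1) ≤ (y - x) * Real.log y := by
  rcases hx.eq_or_lt with rfl | hx
  · simp only [zero_mul, sub_zero]
    linarith
  have h := mul_le_mul_of_nonneg_left (Real.log_le_sub_one_of_pos (div_pos hy hx)) hx.le
  rw [Real.log_div hy.ne' hx.ne', mul_sub_one, mul_div_cancel₀ _ hx.ne'] at h
  linarith

lemma otObj_sub_le {R1 R2 : ℕ} (M : Matrix (Fin R1) (Fin R2) ℝ) {ε : ℝ} (hε : 0 ≤ ε)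
    {T T' : Matrix (Fin R1) (Fin R2) ℝ} (hT : ∀ m n, 0 ≤ T m n)
    (hT' : ∀ m n, 0 < T' m n ∨ T' m n = T m n) :
    otObj M ε T' - otObj M ε T ≤
      ∑ m, ∑ n, (T' m n - T m n) * (M m n + ε * Real.log (T' m n)) := by
  have hsplit : otObj M ε T' - otObj M ε T = ∑ m, ∑ n, ((T' m n - T m n) * M m n +
      ε * (T' m n * (Real.log (T' m n) - 1) - T m n * (Real.log (T m n) - 1))) := by
    simp only [otObj, entropyH, mul_sub, sub_mul, mul_neg, Finset.mul_sum, Finset.sum_add_distrib,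
      Finset.sum_sub_distrib]
    ring
  rw [hsplit]
  gcongr with m _ n _
  rcases hT' m n with h | h
  · nlinarith [mul_le_mul_of_nonneg_left (mul_log_sub_one_sub_le (hT m n) h) hε]
  · simp [h]

section Cycle

variable {α β : Type*} [DecidableEq α] [DecidableEq β]

def cycleMatrix (m m' : α) (n n' : β) : Matrix α β ℝ :=
  Matrix.single m n 1 + Matrix.single m' n' 1 - Matrix.single m n' 1 - Matrix.single m' n 1

lemma sum_cycleMatrix_row [Fintype β] (m m' : α) (n n' : β) (p : α) :
    ∑ q, cycleMatrix m m' n n' p q = 0 := by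
  simp [cycleMatrix, Matrix.single_apply, Finset.sum_add_distrib, Finset.sum_sub_distrib, ite_and]

lemma sum_cycleMatrix_col [Fintype α] (m m' : α) (n n' : β) (q : β) :
    ∑ p, cycleMatrix m m' n n' p q = 0 := by
  simp [cycleMatrix, Matrix.single_apply, Finset.sum_add_distrib, Finset.sum_sub_distrib, ite_and]

lemma sum_cycleMatrix_mul [Fintype α] [Fintype β] (m m' : α) (n n' : β) (F : α → β → ℝ) :
    ∑ p, ∑ q, cycleMatrix m m' n n' p q * F p q = F m n + F m' n' - F m n' - F m' n := by
  simp [cycleMatrix, Matrix.single_apply, add_mul, sub_mul, Finset.sum_add_distrib,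
    Finset.sum_sub_distrib, ite_and]

lemma add_smul_cycleMatrix_pos_or_eq {T : Matrix α β ℝ} (hT : ∀ p q, 0 ≤ T p q)
    {m m' : α} {n n' : β} (hm : m ≠ m') (hn : n ≠ n') {t : ℝ} (ht : 0 < t)
    (h₁ : t < T m n') (h₂ : t < T m' n) (p : α) (q : β) :
    0 < (T + t • cycleMatrix m m' n n') p q ∨ cycleMatrix m m' n n' p q = 0 := by
  simp only [Matrix.add_apply, Matrix.smul_apply, smul_eq_mul, cycleMatrix, Matrix.sub_apply,
    Matrix.single_apply]
  split_ifs <;> simp_all <;> linarith [hT p q]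

end Cycle

lemma add_smul_cycleMatrix_mem_transportPolytope {R1 R2 : ℕ} {μ : Fin R1 → ℝ} {ν : Fin R2 → ℝ}
    {T : Matrix (Fin R1) (Fin R2) ℝ} (hT : T ∈ transportPolytope μ ν)
    {m m' : Fin R1} {n n' : Fin R2} (hm : m ≠ m') (hn : n ≠ n') {t : ℝ} (ht : 0 < t)
    (h₁ : t < T m n') (h₂ : t < T m' n) :
    T + t • cycleMatrix m m' n n' ∈ transportPolytope μ ν := by
  obtain ⟨hnonneg, hrow, hcol⟩ := hT
  refine ⟨fun p q => ?_, fun p => ?_, fun q => ?_⟩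
  · rcases add_smul_cycleMatrix_pos_or_eq hnonneg hm hn ht h₁ h₂ p q with h | h
    · exact h.le
    · simpa [h] using hnonneg p q
  · simp [Finset.sum_add_distrib, ← Finset.mul_sum, sum_cycleMatrix_row, hrow]
  · simp [Finset.sum_add_distrib, ← Finset.mul_sum, sum_cycleMatrix_col, hcol]

section Minimizer

variable {R1 R2 : ℕ} {M : Matrix (Fin R1) (Fin R2) ℝ} {ε : ℝ} {μ : Fin R1 → ℝ} {ν : Fin R2 → ℝ}
  {T : Matrix (Fin R1) (Fin R2) ℝ}

lemma IsMinOn.otObj_cycle_nonneg (hmin : IsMinOn (otObj M ε) (transportPolytope μ ν) T)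
    (hT : T ∈ transportPolytope μ ν) (hε : 0 ≤ ε) {m m' : Fin R1} {n n' : Fin R2}
    (hm : m ≠ m') (hn : n ≠ n') (h₁ : 0 < T m n') (h₂ : 0 < T m' n) :
    ∀ᶠ t in 𝓝[>] 0, 0 ≤ M m n + ε * Real.log (T m n + t) + (M m' n' + ε * Real.log (T m' n' + t))
      - (M m n' + ε * Real.log (T m n' - t)) - (M m' n + ε * Real.log (T m' n - t)) := by
  filter_upwards [self_mem_nhdsWithin,
    eventually_nhdsWithin_of_eventually_nhds (eventually_lt_nhds h₁),
    eventually_nhdsWithin_of_eventually_nhds (eventually_lt_nhds h₂)] with t (ht : 0 < t) ht₁ ht₂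
  set T' := T + t • cycleMatrix m m' n n'
  have hT' : ∀ p q, 0 < T' p q ∨ T' p q = T p q := fun p q =>
    (add_smul_cycleMatrix_pos_or_eq hT.1 hm hn ht ht₁ ht₂ p q).imp_right (by simp [T', ·])
  have hincr : 0 ≤ otObj M ε T' - otObj M ε T :=
    sub_nonneg.2 (hmin (add_smul_cycleMatrix_mem_transportPolytope hT hm hn ht ht₁ ht₂))
  refine nonneg_of_mul_nonneg_right ?_ ht
  convert hincr.trans (otObj_sub_le M hε hT.1 hT') using 1
  simp only [T', Matrix.add_apply, Matrix.smul_apply, smul_eq_mul, add_sub_cancel_left, mul_assoc,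
    ← Finset.mul_sum, sum_cycleMatrix_mul]
  simp [cycleMatrix, hm, hn, hm.symm, hn.symm, sub_eq_add_neg]

lemma IsMinOn.otObj_pos (hmin : IsMinOn (otObj M ε) (transportPolytope μ ν) T)
    (hT : T ∈ transportPolytope μ ν) (hε : 0 < ε) (hμ : ∀ m, 0 < μ m) (hν : ∀ n, 0 < ν n)
    (m : Fin R1) (n : Fin R2) : 0 < T m n := by
  refine (hT.1 m n).lt_of_ne' fun h0 => ?_
  obtain ⟨n', -, hn'⟩ : ∃ n' ∈ Finset.univ, (0 : ℝ) < T m n' :=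
    Finset.exists_lt_of_sum_lt (by simpa [hT.2.1 m] using hμ m)
  obtain ⟨m', -, hm'⟩ : ∃ m' ∈ Finset.univ, (0 : ℝ) < T m' n :=
    Finset.exists_lt_of_sum_lt (by simpa [hT.2.2 n] using hν n)
  have hm : m ≠ m' := by rintro rfl; simp [h0] at hm'
  have hn : n ≠ n' := by rintro rfl; simp [h0] at hn'
  -- `T m' n'` may vanish as well, so its term is only bounded above, by its value at `t = 1`
  have hbound : Tendsto (fun t => ε * Real.log t + (M m n + (M m' n' + ε * Real.log (T m' n' + 1))
      - (M m n' + ε * Real.log (T m n' - t)) - (M m' n + ε * Real.log (T m' n - t))))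
      (𝓝[>] 0) atBot := by
    refine (Real.tendsto_log_nhdsGT_zero.const_mul_atBot hε).atBot_add
      (tendsto_nhdsWithin_of_tendsto_nhds (ContinuousAt.tendsto ?_))
    fun_prop (disch := simp [hn'.ne', hm'.ne'])
  obtain ⟨t, ht : 0 < t, ht₁, hcycle, hneg⟩ := (eventually_mem_nhdsWithin.and <|
    (eventually_nhdsWithin_of_eventually_nhds (eventually_lt_nhds one_pos)).and <|
    (hmin.otObj_cycle_nonneg hT hε.le hm hn hn' hm').and (hbound.eventually_lt_atBot 0)).exists
  have hlog : Real.log (T m' n' + t) ≤ Real.log (T m' n' + 1) :=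
    Real.log_le_log (by linarith [hT.1 m' n']) (by linarith)
  rw [h0, zero_add] at hcycle
  linarith [mul_le_mul_of_nonneg_left hlog hε.le]

lemma IsMinOn.otObj_cycle_eq (hmin : IsMinOn (otObj M ε) (transportPolytope μ ν) T)
    (hT : T ∈ transportPolytope μ ν) (hε : 0 ≤ ε) (hpos : ∀ m n, 0 < T m n)
    (m m' : Fin R1) (n n' : Fin R2) :
    M m n + ε * Real.log (T m n) + (M m' n' + ε * Real.log (T m' n')) =
      M m n' + ε * Real.log (T m n') + (M m' n + ε * Real.log (T m' n)) := by
  rcases eq_or_ne m m' with rfl | hm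
  · ring
  have key : ∀ {q q'}, q ≠ q' → 0 ≤ M m q + ε * Real.log (T m q) +
      (M m' q' + ε * Real.log (T m' q')) - (M m q' + ε * Real.log (T m q')) -
      (M m' q + ε * Real.log (T m' q)) := by
    intro q q' hq
    have hlim := ge_of_tendsto (tendsto_nhdsWithin_of_tendsto_nhds (ContinuousAt.tendsto
      (by fun_prop (disch := simp [(hpos _ _).ne']))))
      (hmin.otObj_cycle_nonneg hT hε hm hq (hpos m q') (hpos m' q))
    simpa using hlim
  rcases eq_or_ne n n' with rfl | hn
  · ring
  linarith [key hn, key hn.symm]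

end Minimizer

lemma exists_add_of_add_eq_add {α β G : Type*} [AddCommGroup G] (f : α → β → G)
    (h : ∀ m m' n n', f m n + f m' n' = f m n' + f m' n) :
    ∃ (a : α → G) (b : β → G), ∀ m n, f m n = a m + b n := by
  by_cases hne : Nonempty (α × β)
  · obtain ⟨m₀, n₀⟩ := hne
    refine ⟨fun m => f m n₀ - f m₀ n₀, fun n => f m₀ n, fun m n => ?_⟩
    rw [sub_add_eq_add_sub, eq_sub_iff_add_eq, h]
  · exact ⟨0, 0, fun m n => (hne ⟨(m, n)⟩).elim⟩

theorem entropic_ot_minimizer_scaling_form_general {R1 R2 : ℕ}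
    (M : Matrix (Fin R1) (Fin R2) ℝ)
    (ε : ℝ) (hε : 0 < ε)
    (K : Matrix (Fin R1) (Fin R2) ℝ) (hK : ∀ m n, K m n = Real.exp (-(M m n) / ε))
    (μ : Fin R1 → ℝ) (ν : Fin R2 → ℝ)
    (hμpos : ∀ m, 0 < μ m) (hνpos : ∀ n, 0 < ν n)
    (T : Matrix (Fin R1) (Fin R2) ℝ)
    (hT : T ∈ transportPolytope μ ν)
    (hTmin : ∀ T' ∈ transportPolytope μ ν, otObj M ε T ≤ otObj M ε T') :
    ∃ (u : Fin R1 → ℝ) (v : Fin R2 → ℝ),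
      (∀ m, 0 < u m) ∧ (∀ n, 0 < v n) ∧
        T = Matrix.diagonal u * K * Matrix.diagonal v := by
  have hmin : IsMinOn (otObj M ε) (transportPolytope μ ν) T := isMinOn_iff.2 hTmin
  have hpos := hmin.otObj_pos hT hε hμpos hνpos
  obtain ⟨a, b, hab⟩ := exists_add_of_add_eq_add (fun m n => M m n + ε * Real.log (T m n))
    (hmin.otObj_cycle_eq hT hε.le hpos)
  refine ⟨fun m => Real.exp (a m / ε), fun n => Real.exp (b n / ε), fun _ => Real.exp_pos _,
    fun _ => Real.exp_pos _, Matrix.ext fun m n => ?_⟩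
  rw [Matrix.mul_diagonal, Matrix.diagonal_mul, hK, ← Real.exp_add, ← Real.exp_add,
    ← Real.exp_log (hpos m n)]
  congr 1
  field_simp
  linarith [hab m n]

/-- Any minimizer of `⟨T, M⟩ - ε H(T)` over `Π(μ, ν)` (with positive marginals)
has the scaling form `T = diag(u) K diag(v)` with `K = exp(-M/ε)` entrywise and
entrywise positive vectors `u`, `v`. -/
theorem entropic_ot_minimizer_scaling_form {R1 R2 : ℕ}
    (M : Matrix (Fin R1) (Fin R2) ℝ) (hM : ∀ m n, 0 ≤ M m n)
    (ε : ℝ) (hε : 0 < ε)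
    (K : Matrix (Fin R1) (Fin R2) ℝ) (hK : ∀ m n, K m n = Real.exp (-(M m n) / ε))
    (μ : Fin R1 → ℝ) (ν : Fin R2 → ℝ)
    (hμ : μ ∈ probSimplex R1) (hν : ν ∈ probSimplex R2)
    (hμpos : ∀ m, 0 < μ m) (hνpos : ∀ n, 0 < ν n)
    (T : Matrix (Fin R1) (Fin R2) ℝ)
    (hT : T ∈ transportPolytope μ ν)
    (hTmin : ∀ T' ∈ transportPolytope μ ν, otObj M ε T ≤ otObj M ε T') :
    ∃ (u : Fin R1 → ℝ) (v : Fin R2 → ℝ),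
      (∀ m, 0 < u m) ∧ (∀ n, 0 < v n) ∧
        T = Matrix.diagonal u * K * Matrix.diagonal v :=
  entropic_ot_minimizer_scaling_form_general M ε hε K hK μ ν hμpos hνpos T hT hTmin
end
end

section
/- Let M ∈ ℝ_{≥0}^{R1×R2}, ε > 0, K = exp(−M/ε) (entrywise), and let μ ∈ P_{R1}, ν ∈ P_{R2} have strictly positive entries. If positive vectors u ∈ ℝ_{>0}^{R1} and v ∈ ℝ_{>0}^{R2} satisfy the Sinkhorn fixed-point equations u = μ ./ (K v) and v = ν ./ (Kᵀ u) (elementwise division), then T = diag(u) K diag(v) belongs to the transport polytope Π(μ,ν) and is the minimizer of ⟨T,M⟩ − ε H(T) over Π(μ,ν). -/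
noncomputable section

open Finset

lemma entropy_tangent (x a : ℝ) (hx : 0 ≤ x) (ha : 0 < a) :
    x * Real.log a - a ≤ x * (Real.log x - 1) := by
  rcases eq_or_lt_of_le hx with h | h
  · rw [← h]; simp; linarith
  · have hlog := Real.log_le_sub_one_of_pos (div_pos ha h)
    rw [Real.log_div (ne_of_gt ha) (ne_of_gt h)] at hlog
    have hxa : x * (a / x) = a := by field_simp
    nlinarith [mul_le_mul_of_nonneg_left hlog h.le]

/-- If positive vectors `u`, `v` satisfy the Sinkhorn fixed-point equations
`u = μ ./ (K v)` and `v = ν ./ (Kᵀ u)` with `K = exp(-M/ε)`, then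
`T = diag(u) K diag(v)` belongs to `Π(μ, ν)` and minimizes `⟨T, M⟩ - ε H(T)`
over `Π(μ, ν)`. -/
theorem sinkhorn_fixed_point_is_minimizer {R1 R2 : ℕ}
    (M : Matrix (Fin R1) (Fin R2) ℝ) (hM : ∀ m n, 0 ≤ M m n)
    (ε : ℝ) (hε : 0 < ε)
    (K : Matrix (Fin R1) (Fin R2) ℝ) (hK : ∀ m n, K m n = Real.exp (-(M m n) / ε))
    (μ : Fin R1 → ℝ) (ν : Fin R2 → ℝ)
    (hμ : μ ∈ probSimplex R1) (hν : ν ∈ probSimplex R2)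
    (hμpos : ∀ m, 0 < μ m) (hνpos : ∀ n, 0 < ν n)
    (u : Fin R1 → ℝ) (v : Fin R2 → ℝ)
    (hupos : ∀ m, 0 < u m) (hvpos : ∀ n, 0 < v n)
    (hu : ∀ m, u m = μ m / K.mulVec v m)
    (hv : ∀ n, v n = ν n / K.transpose.mulVec u n) :
    Matrix.diagonal u * K * Matrix.diagonal v ∈ transportPolytope μ ν ∧
      ∀ T' ∈ transportPolytope μ ν,
        otObj M ε (Matrix.diagonal u * K * Matrix.diagonal v) ≤ otObj M ε T' := by
  have hεne : ε ≠ 0 := ne_of_gt hε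
  have hR2 : Nonempty (Fin R2) := by
    rcases Nat.eq_zero_or_pos R2 with h | h
    · subst h; simpa using hν.2
    · exact ⟨⟨0, h⟩⟩
  have hR1 : Nonempty (Fin R1) := by
    rcases Nat.eq_zero_or_pos R1 with h | h
    · subst h; simpa using hμ.2
    · exact ⟨⟨0, h⟩⟩
  have hKpos : ∀ m n, 0 < K m n := fun m n => by rw [hK]; exact Real.exp_pos _
  set T : Matrix (Fin R1) (Fin R2) ℝ := Matrix.diagonal u * K * Matrix.diagonal v with hT
  have hTapp : ∀ m n, T m n = u m * K m n * v n := by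
    intro m n
    rw [hT, Matrix.mul_diagonal, Matrix.diagonal_mul]
  have hTpos : ∀ m n, 0 < T m n := fun m n => by
    rw [hTapp]; exact mul_pos (mul_pos (hupos m) (hKpos m n)) (hvpos n)
  have hKv : ∀ m, K.mulVec v m = ∑ n, K m n * v n := fun m => rfl
  have hKvpos : ∀ m, 0 < K.mulVec v m := fun m => by
    rw [hKv]
    exact Finset.sum_pos (fun n _ => mul_pos (hKpos m n) (hvpos n)) univ_nonempty
  have hKtu : ∀ n, K.transpose.mulVec u n = ∑ m, K m n * u m := by
    intro n; simp [Matrix.mulVec, dotProduct, Matrix.transpose_apply]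
  have hKtupos : ∀ n, 0 < K.transpose.mulVec u n := fun n => by
    rw [hKtu]
    exact Finset.sum_pos (fun m _ => mul_pos (hKpos m n) (hupos m)) univ_nonempty
  have hrow : ∀ m, ∑ n, T m n = μ m := by
    intro m
    have h1 : ∑ n, T m n = u m * K.mulVec v m := by
      rw [hKv, Finset.mul_sum]
      exact Finset.sum_congr rfl fun n _ => by rw [hTapp]; ring
    rw [h1, hu m, div_mul_cancel₀ _ (ne_of_gt (hKvpos m))]
  have hcol : ∀ n, ∑ m, T m n = ν n := by
    intro n
    have h1 : ∑ m, T m n = K.transpose.mulVec u n * v n := by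
      rw [hKtu, Finset.sum_mul]
      exact Finset.sum_congr rfl fun m _ => by rw [hTapp]; ring
    rw [h1, hv n, mul_div_cancel₀ _ (ne_of_gt (hKtupos n))]
  have hmem : T ∈ transportPolytope μ ν :=
    ⟨fun m n => (hTpos m n).le, hrow, hcol⟩
  -- the key log identity
  have hlogT : ∀ m n, M m n + ε * Real.log (T m n)
      = ε * (Real.log (u m) + Real.log (v n)) := by
    intro m n
    rw [hTapp, Real.log_mul (ne_of_gt (mul_pos (hupos m) (hKpos m n))) (ne_of_gt (hvpos n)),
        Real.log_mul (ne_of_gt (hupos m)) (ne_of_gt (hKpos m n)), hK, Real.log_exp]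
    field_simp
    ring
  set S : ℝ := ε * ((∑ m, μ m * Real.log (u m)) + ∑ n, ν n * Real.log (v n)) - ε with hS
  -- total mass is 1
  have hmass : ∀ (T' : Matrix (Fin R1) (Fin R2) ℝ), (∀ m, ∑ n, T' m n = μ m) →
      ∑ m, ∑ n, T' m n = 1 := by
    intro T' hr
    rw [Finset.sum_congr rfl fun m _ => hr m]
    exact hμ.2
  -- sum against the separable potential
  have hsumc : ∀ (T' : Matrix (Fin R1) (Fin R2) ℝ), (∀ m, ∑ n, T' m n = μ m) →
      (∀ n, ∑ m, T' m n = ν n) →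
      ∑ m, ∑ n, T' m n * (ε * (Real.log (u m) + Real.log (v n))) = S + ε := by
    intro T' hr hc
    have h1 : ∑ m, ∑ n, T' m n * Real.log (u m) = ∑ m, μ m * Real.log (u m) := by
      refine Finset.sum_congr rfl fun m _ => ?_
      rw [← Finset.sum_mul, hr m]
    have h2 : ∑ m, ∑ n, T' m n * Real.log (v n) = ∑ n, ν n * Real.log (v n) := by
      rw [Finset.sum_comm]
      refine Finset.sum_congr rfl fun n _ => ?_
      rw [← Finset.sum_mul, hc n]
    have h3 : ∀ m n, T' m n * (ε * (Real.log (u m) + Real.log (v n)))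
        = ε * (T' m n * Real.log (u m)) + ε * (T' m n * Real.log (v n)) := fun m n => by ring
    calc ∑ m, ∑ n, T' m n * (ε * (Real.log (u m) + Real.log (v n)))
        = ∑ m, ∑ n, (ε * (T' m n * Real.log (u m)) + ε * (T' m n * Real.log (v n))) := by
          exact Finset.sum_congr rfl fun m _ => Finset.sum_congr rfl fun n _ => h3 m n
      _ = ε * (∑ m, ∑ n, T' m n * Real.log (u m))
          + ε * (∑ m, ∑ n, T' m n * Real.log (v n)) := by
          simp [Finset.sum_add_distrib, Finset.mul_sum]
      _ = S + ε := by rw [h1, h2, hS]; ring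
  -- rewrite the objective entrywise
  have hobj : ∀ T' : Matrix (Fin R1) (Fin R2) ℝ,
      otObj M ε T' = ∑ m, ∑ n, (T' m n * M m n + ε * (T' m n * (Real.log (T' m n) - 1))) := by
    intro T'
    simp only [otObj, entropyH, Finset.sum_add_distrib, mul_neg, sub_neg_eq_add,
      Finset.mul_sum]
  -- value of the objective at T
  have hvalT : otObj M ε T = S := by
    rw [hobj]
    have heq : ∀ m n, T m n * M m n + ε * (T m n * (Real.log (T m n) - 1))
        = T m n * (ε * (Real.log (u m) + Real.log (v n))) - ε * T m n := by
      intro m n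
      have h2 := hlogT m n
      nlinarith [h2, hTpos m n]
    calc (∑ m, ∑ n, (T m n * M m n + ε * (T m n * (Real.log (T m n) - 1))))
        = ∑ m, ∑ n, (T m n * (ε * (Real.log (u m) + Real.log (v n))) - ε * T m n) :=
          Finset.sum_congr rfl fun m _ => Finset.sum_congr rfl fun n _ => heq m n
      _ = (∑ m, ∑ n, T m n * (ε * (Real.log (u m) + Real.log (v n))))
          - ε * (∑ m, ∑ n, T m n) := by
          simp [Finset.sum_sub_distrib, Finset.mul_sum]
      _ = S := by rw [hsumc T hrow hcol, hmass T hrow]; ring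
  refine ⟨hmem, fun T' hT' => ?_⟩
  obtain ⟨hpos, hr, hc⟩ := hT'
  rw [hvalT, hobj]
  have key : ∀ m n, T' m n * (ε * (Real.log (u m) + Real.log (v n))) - ε * T m n
      ≤ T' m n * M m n + ε * (T' m n * (Real.log (T' m n) - 1)) := by
    intro m n
    have h1 := entropy_tangent (T' m n) (T m n) (hpos m n) (hTpos m n)
    have h2 := hlogT m n
    have h4 := mul_le_mul_of_nonneg_left h1 hε.le
    nlinarith [h2, h4, hpos m n]
  calc S = (∑ m, ∑ n, T' m n * (ε * (Real.log (u m) + Real.log (v n))))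
        - ε * (∑ m, ∑ n, T' m n) := by rw [hsumc T' hr hc, hmass T' hr]; ring
    _ = ∑ m, ∑ n, (T' m n * (ε * (Real.log (u m) + Real.log (v n))) - ε * T m n) := by
        have : ε * (∑ m, ∑ n, T' m n) = ε * (∑ m, ∑ n, T m n) := by
          rw [hmass T' hr, hmass T hrow]
        rw [this]
        simp [Finset.sum_sub_distrib, Finset.mul_sum]
    _ ≤ ∑ m, ∑ n, (T' m n * M m n + ε * (T' m n * (Real.log (T' m n) - 1))) :=
        Finset.sum_le_sum fun m _ => Finset.sum_le_sum fun n _ => key m n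
end
end

section
/- Let M ∈ ℝ_{≥0}^{R1×R2}, ε > 0, K = exp(−M/ε) (entrywise), and let μ ∈ P_{R1}, ν ∈ P_{R2} have strictly positive entries. If positive vectors u, v satisfy u = μ ./ (K v) and v = ν ./ (Kᵀ u), then the pair (α, β) = (ε log u, ε log v) (logarithms taken elementwise) attains the maximum of the dual objective αᵀμ + βᵀν − ε Σ_{m,n} exp((α_m + β_n − M_{mn})/ε) over all α ∈ ℝ^{R1}, β ∈ ℝ^{R2}. -/
noncomputable section

open Finset

/-- If positive vectors `u`, `v` satisfy the Sinkhorn fixed-point equations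
`u = μ ./ (K v)` and `v = ν ./ (Kᵀ u)` with `K = exp(-M/ε)`, then
`(α, β) = (ε log u, ε log v)` attains the maximum of the dual objective. -/
theorem sinkhorn_fixed_point_attains_dual_max {R1 R2 : ℕ}
    (M : Matrix (Fin R1) (Fin R2) ℝ) (hM : ∀ m n, 0 ≤ M m n)
    (ε : ℝ) (hε : 0 < ε)
    (K : Matrix (Fin R1) (Fin R2) ℝ) (hK : ∀ m n, K m n = Real.exp (-(M m n) / ε))
    (μ : Fin R1 → ℝ) (ν : Fin R2 → ℝ)
    (hμ : μ ∈ probSimplex R1) (hν : ν ∈ probSimplex R2)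
    (hμpos : ∀ m, 0 < μ m) (hνpos : ∀ n, 0 < ν n)
    (u : Fin R1 → ℝ) (v : Fin R2 → ℝ)
    (hupos : ∀ m, 0 < u m) (hvpos : ∀ n, 0 < v n)
    (hu : ∀ m, u m = μ m / K.mulVec v m)
    (hv : ∀ n, v n = ν n / K.transpose.mulVec u n) :
    ∀ (α : Fin R1 → ℝ) (β : Fin R2 → ℝ),
      dualObj M ε μ ν α β ≤
        dualObj M ε μ ν (fun m => ε * Real.log (u m)) (fun n => ε * Real.log (v n)) := by
  intro α β
  set α' : Fin R1 → ℝ := fun m => ε * Real.log (u m) with hα'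
  set β' : Fin R2 → ℝ := fun n => ε * Real.log (v n) with hβ'
  set P : Fin R1 → Fin R2 → ℝ := fun m n => u m * (K m n * v n) with hP
  -- exp at the fixed point equals P
  have hexpP : ∀ m n, Real.exp ((α' m + β' n - M m n) / ε) = P m n := by
    intro m n
    have : (α' m + β' n - M m n) / ε
        = Real.log (u m) + (Real.log (v n) + -(M m n) / ε) := by
      field_simp [hα', hβ']
      ring
    rw [this, Real.exp_add, Real.exp_add, Real.exp_log (hupos m),
      Real.exp_log (hvpos n), hP, ← hK]
    ring
  -- row sums of P are μ
  have hKv : ∀ m, u m * K.mulVec v m = μ m := by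
    intro m
    have hne : K.mulVec v m ≠ 0 := by
      intro h
      have := hu m
      rw [h, div_zero] at this
      exact (hupos m).ne' this
    rw [hu m, div_mul_cancel₀ _ hne]
  have hKu : ∀ n, v n * K.transpose.mulVec u n = ν n := by
    intro n
    have hne : K.transpose.mulVec u n ≠ 0 := by
      intro h
      have := hv n
      rw [h, div_zero] at this
      exact (hvpos n).ne' this
    rw [hv n, div_mul_cancel₀ _ hne]
  have hrow : ∀ m, ∑ n, P m n = μ m := by
    intro m
    rw [← hKv m, Matrix.mulVec, dotProduct, Finset.mul_sum]
  have hcol : ∀ n, ∑ m, P m n = ν n := by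
    intro n
    rw [← hKu n, Matrix.mulVec, dotProduct, Finset.mul_sum]
    refine Finset.sum_congr rfl fun m _ => ?_
    simp [hP, Matrix.transpose]
    ring
  -- pointwise convexity inequality
  have key : ∀ m n, P m n * ((α m - α' m) + (β n - β' n))
      ≤ ε * (Real.exp ((α m + β n - M m n) / ε)
            - Real.exp ((α' m + β' n - M m n) / ε)) := by
    intro m n
    set s := (α' m + β' n - M m n) / ε
    set t := (α m + β n - M m n) / ε
    have h1 : 1 + (t - s) ≤ Real.exp (t - s) := by linarith [Real.add_one_le_exp (t - s)]
    have hts : Real.exp t = Real.exp s * Real.exp (t - s) := by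
      rw [← Real.exp_add]; ring_nf
    have hpos : 0 < Real.exp s := Real.exp_pos s
    have h2 : Real.exp s * (1 + (t - s)) ≤ Real.exp t := by
      rw [hts]; exact mul_le_mul_of_nonneg_left h1 hpos.le
    have hdiff : ε * (t - s) = (α m - α' m) + (β n - β' n) := by
      have : t - s = ((α m - α' m) + (β n - β' n)) / ε := by
        simp only [t, s]; field_simp; ring
      rw [this, mul_div_cancel₀ _ hε.ne']
    calc P m n * ((α m - α' m) + (β n - β' n))
        = Real.exp s * (ε * (t - s)) := by rw [hdiff, hexpP m n]
      _ = ε * (Real.exp s * (1 + (t - s)) - Real.exp s) := by ring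
      _ ≤ ε * (Real.exp t - Real.exp s) := by
          have := sub_le_sub_right h2 (Real.exp s)
          exact mul_le_mul_of_nonneg_left this hε.le
  -- sum the pointwise inequality
  have main : ∑ m, ∑ n, P m n * ((α m - α' m) + (β n - β' n))
      ≤ ε * ((∑ m, ∑ n, Real.exp ((α m + β n - M m n) / ε))
            - (∑ m, ∑ n, Real.exp ((α' m + β' n - M m n) / ε))) := by
    have := Finset.sum_le_sum (fun m (_ : m ∈ Finset.univ) =>
      Finset.sum_le_sum (fun n (_ : n ∈ Finset.univ) => key m n))
    calc ∑ m, ∑ n, P m n * ((α m - α' m) + (β n - β' n))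
        ≤ ∑ m, ∑ n, ε * (Real.exp ((α m + β n - M m n) / ε)
            - Real.exp ((α' m + β' n - M m n) / ε)) := this
      _ = _ := by
          simp only [← Finset.mul_sum, Finset.sum_sub_distrib]
  -- rewrite the LHS
  have lhs_eq : ∑ m, ∑ n, P m n * ((α m - α' m) + (β n - β' n))
      = (∑ m, (α m - α' m) * μ m) + (∑ n, (β n - β' n) * ν n) := by
    have : ∀ m, ∑ n, P m n * ((α m - α' m) + (β n - β' n))
        = (α m - α' m) * (∑ n, P m n) + ∑ n, P m n * (β n - β' n) := by
      intro m
      rw [Finset.mul_sum, ← Finset.sum_add_distrib]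
      refine Finset.sum_congr rfl fun n _ => ?_
      ring
    rw [Finset.sum_congr rfl (fun m _ => this m), Finset.sum_add_distrib]
    congr 1
    · exact Finset.sum_congr rfl fun m _ => by rw [hrow m]
    · rw [Finset.sum_comm]
      refine Finset.sum_congr rfl fun n _ => ?_
      rw [← Finset.sum_mul, hcol n]; ring
  rw [lhs_eq] at main
  have e1 : ∑ m, (α m - α' m) * μ m = (∑ m, α m * μ m) - ∑ m, α' m * μ m := by
    rw [← Finset.sum_sub_distrib]; exact Finset.sum_congr rfl fun m _ => by ring
  have e2 : ∑ n, (β n - β' n) * ν n = (∑ n, β n * ν n) - ∑ n, β' n * ν n := by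
    rw [← Finset.sum_sub_distrib]; exact Finset.sum_congr rfl fun n _ => by ring
  rw [e1, e2] at main
  simp only [dualObj]
  linarith [main]
end
end

section
/- (Birkhoff–Hopf contraction theorem) Let K ∈ ℝ_{>0}^{R1×R2} be a matrix with strictly positive entries, ψ(K) = max_{i,j,k,l} (K_{ik} K_{jl})/(K_{jk} K_{il}), and κ(K) = (√ψ(K) − 1)/(√ψ(K) + 1). Then for any pair of entrywise positive vectors x, y ∈ ℝ_{>0}^{R2}, d_HP(Kx, Ky) ≤ κ(K) · d_HP(x, y). -/
/-!
Let `m ≤ x_k / y_k ≤ m u²` be the extreme ratios of `x` and `y`. The vectors `x - m y` and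
`m u² y - x` are nonnegative, so their images `a, b` under `K` satisfy `a_i b_j ≤ ψ a_j b_i`.
As `Kx` and `Ky` are proportional to `u² a + b` and `a + b`, every ratio
`(Kx)_i (Ky)_j / ((Kx)_j (Ky)_i)` is at most `((1 + u v) / (u + v))²` with `v = √ψ`, and
`log ((1 + u v) / (u + v)) ≤ κ log u` because the difference of the two sides is monotone in `u`.
-/

noncomputable section

/-- The Hilbert projective metric `d_HP(x,y) = log max_{i,j} (x_i y_j)/(x_j y_i)`
on entrywise positive vectors. -/
def dHP {R : ℕ} (x y : Fin R → ℝ) : ℝ :=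
  Real.log (⨆ i, ⨆ j, x i * y j / (x j * y i))

/-- `ψ(K) = max_{i,j,k,l} (K_{ik} K_{jl})/(K_{jk} K_{il})` for a positive matrix `K`. -/
def psiK {R1 R2 : ℕ} (K : Matrix (Fin R1) (Fin R2) ℝ) : ℝ :=
  ⨆ i, ⨆ j, ⨆ k, ⨆ l, K i k * K j l / (K j k * K i l)

/-- The Birkhoff contraction constant `κ(K) = (√ψ(K) - 1)/(√ψ(K) + 1)`. -/
def kappaK {R1 R2 : ℕ} (K : Matrix (Fin R1) (Fin R2) ℝ) : ℝ :=
  (Real.sqrt (psiK K) - 1) / (Real.sqrt (psiK K) + 1)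

open Real Set Matrix

section HilbertMetric

variable {R : ℕ} {x y : Fin R → ℝ}

lemma ratio_le_iSup_ratio (i j : Fin R) :
    x i * y j / (x j * y i) ≤ ⨆ i, ⨆ j, x i * y j / (x j * y i) :=
  le_ciSup₂ (f := fun i j => x i * y j / (x j * y i))
    (finite_iUnion fun _ => finite_range _).bddAbove i j

lemma log_ratio_le_dHP (hx : ∀ i, 0 < x i) (hy : ∀ i, 0 < y i) (i j : Fin R) :
    log (x i * y j / (x j * y i)) ≤ dHP x y :=
  log_le_log (div_pos (mul_pos (hx i) (hy j)) (mul_pos (hx j) (hy i)))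
    (ratio_le_iSup_ratio i j)

lemma dHP_le_log [Nonempty (Fin R)] (hx : ∀ i, 0 < x i) (hy : ∀ i, 0 < y i) {c : ℝ}
    (h : ∀ i j, x i * y j ≤ c * (x j * y i)) : dHP x y ≤ log c := by
  obtain ⟨i⟩ := ‹Nonempty (Fin R)›
  have hpos : 0 < ⨆ i, ⨆ j, x i * y j / (x j * y i) := by
    refine one_pos.trans_le ((ratio_le_iSup_ratio i i).trans_eq' ?_)
    rw [div_self (mul_pos (hx i) (hy i)).ne']
  refine log_le_log hpos (ciSup_le fun i => ciSup_le fun j => ?_)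
  exact (div_le_iff₀ (mul_pos (hx j) (hy i))).2 (h i j)

end HilbertMetric

section PositiveMatrix

variable {R1 R2 : ℕ} {K : Matrix (Fin R1) (Fin R2) ℝ}

lemma mul_le_psiK_mul (hK : ∀ i j, 0 < K i j) (i j : Fin R1) (k l : Fin R2) :
    K i k * K j l ≤ psiK K * (K j k * K i l) := by
  refine (div_le_iff₀ (mul_pos (hK j k) (hK i l))).1 ?_
  exact (le_ciSup₂ (f := fun k l => K i k * K j l / (K j k * K i l))
    (finite_iUnion fun _ => finite_range _).bddAbove k l).trans
    (le_ciSup₂ (f := fun i j => ⨆ k, ⨆ l, K i k * K j l / (K j k * K i l))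
      (finite_iUnion fun _ => finite_range _).bddAbove i j)

lemma one_le_psiK [Nonempty (Fin R1)] [Nonempty (Fin R2)] (hK : ∀ i j, 0 < K i j) :
    1 ≤ psiK K := by
  obtain ⟨i⟩ := ‹Nonempty (Fin R1)›
  obtain ⟨k⟩ := ‹Nonempty (Fin R2)›
  exact le_of_mul_le_mul_right (by simpa using mul_le_psiK_mul hK i i k k)
    (mul_pos (hK i k) (hK i k))

lemma mulVec_pos [Nonempty (Fin R2)] (hK : ∀ i j, 0 < K i j) {x : Fin R2 → ℝ}
    (hx : ∀ i, 0 < x i) (i : Fin R1) : 0 < (K *ᵥ x) i :=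
  Finset.sum_pos (fun k _ => mul_pos (hK i k) (hx k)) Finset.univ_nonempty

lemma mulVec_mul_mulVec_le {c : ℝ} (hK : ∀ i j k l, K i k * K j l ≤ c * (K j k * K i l))
    {p q : Fin R2 → ℝ} (hp : 0 ≤ p) (hq : 0 ≤ q) (i j : Fin R1) :
    (K *ᵥ p) i * (K *ᵥ q) j ≤ c * ((K *ᵥ p) j * (K *ᵥ q) i) := by
  simp only [mulVec, dotProduct]
  rw [Finset.sum_mul_sum, Finset.sum_mul_sum, Finset.mul_sum]
  simp only [Finset.mul_sum]
  refine Finset.sum_le_sum fun k _ => Finset.sum_le_sum fun l _ => ?_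
  have := mul_le_mul_of_nonneg_right (hK i j k l) (mul_nonneg (hp k) (hq l))
  linarith

end PositiveMatrix

/-- In terms of `s = a / b`, `t = a' / b'` and `φ(s) = (u² s + 1) / (s + 1)`:
`φ(s) / φ(t) ≤ ((1 + u v) / (u + v))²` whenever `s ≤ v² t`. -/
lemma two_point_ratio_le {u v a b a' b' : ℝ} (hu : 1 ≤ u) (hv : 1 ≤ v) (ha : 0 ≤ a)
    (hb : 0 ≤ b) (ha' : 0 ≤ a') (hb' : 0 ≤ b') (h : a * b' ≤ v ^ 2 * (a' * b)) :
    (u ^ 2 * a + b) * (a' + b') * (u + v) ^ 2 ≤ (1 + u * v) ^ 2 * ((u ^ 2 * a' + b') * (a + b)) := by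
  have hv2 : 0 ≤ v ^ 2 - 1 := by nlinarith
  have hG : 0 ≤ (u ^ 2 * a * a' + b * b') * (v ^ 2 - 1) + a' * b * v * (2 * u + v + u ^ 2 * v)
      - a * b' * (u ^ 2 + 2 * u * v + 1) := by
    rcases (mul_nonneg ha' hb).eq_or_lt with h0 | hpos
    · have : a * b' = 0 := le_antisymm (by simpa [← h0] using h) (mul_nonneg ha hb')
      rw [← h0, this]
      nlinarith [mul_nonneg (add_nonneg (mul_nonneg (mul_nonneg (sq_nonneg u) ha) ha')
        (mul_nonneg hb hb')) hv2]
    · refine nonneg_of_mul_nonneg_right ?_ (mul_pos (by positivity) hpos : 0 < v ^ 2 * (a' * b))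
      -- the expression is affine in `a`; eliminate `a` against the constraint `a b' ≤ v² a' b`
      have hid : v ^ 2 * (a' * b) * ((u ^ 2 * a * a' + b * b') * (v ^ 2 - 1)
            + a' * b * v * (2 * u + v + u ^ 2 * v) - a * b' * (u ^ 2 + 2 * u * v + 1))
          = a * b * (v ^ 2 - 1) * (u * v * a' - b') ^ 2
            + (b * b' * (v ^ 2 - 1) + a' * b * v * (2 * u + v + u ^ 2 * v))
              * (v ^ 2 * (a' * b) - a * b') := by
        ring
      rw [hid]
      positivity
  linear_combination mul_nonneg (by nlinarith : (0 : ℝ) ≤ u ^ 2 - 1) hG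

lemma mulVec_mul_mulVec_le_of_bounds {R1 R2 : ℕ} {K : Matrix (Fin R1) (Fin R2) ℝ} {u v m : ℝ}
    (hK0 : ∀ i j, 0 ≤ K i j) (hK : ∀ i j k l, K i k * K j l ≤ v ^ 2 * (K j k * K i l))
    (hu : 1 ≤ u) (hv : 1 ≤ v) (hm : 0 < m) {x y : Fin R2 → ℝ}
    (hlow : ∀ k, m * y k ≤ x k) (hup : ∀ k, x k ≤ m * u ^ 2 * y k) (i j : Fin R1) :
    (K *ᵥ x) i * (K *ᵥ y) j ≤ ((1 + u * v) / (u + v)) ^ 2 * ((K *ᵥ x) j * (K *ᵥ y) i) := by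
  rw [div_pow, div_mul_eq_mul_div, le_div_iff₀ (by positivity)]
  rcases hu.eq_or_lt with rfl | hu1
  · have : x = m • y := funext fun k => le_antisymm (by simpa using hup k) (hlow k)
    simp only [this, mulVec_smul, Pi.smul_apply, smul_eq_mul]
    exact le_of_eq (by ring)
  set p := x - m • y
  set q := (m * u ^ 2) • y - x
  have hp : 0 ≤ p := fun k => by simpa [p] using hlow k
  have hq : 0 ≤ q := fun k => by simpa [q, mul_assoc] using hup k
  have hKp : ∀ i, 0 ≤ (K *ᵥ p) i := fun i => dotProduct_nonneg_of_nonneg (hK0 i) hp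
  have hKq : ∀ i, 0 ≤ (K *ᵥ q) i := fun i => dotProduct_nonneg_of_nonneg (hK0 i) hq
  have H := two_point_ratio_le hu hv (hKp i) (hKq i) (hKp j) (hKq j)
    (mulVec_mul_mulVec_le hK hp hq i j)
  simp only [p, q, mulVec_sub, mulVec_smul, Pi.sub_apply, Pi.smul_apply, smul_eq_mul] at H
  -- `u² a + b = (u² - 1) Kx` and `a + b = m (u² - 1) Ky`
  refine le_of_mul_le_mul_left (a := m * (u ^ 2 - 1) ^ 2) ?_
    (mul_pos hm (pow_pos (by nlinarith) 2))
  linear_combination H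

lemma log_one_add_mul_div_add_le {u v : ℝ} (hu : 1 ≤ u) (hv : 1 ≤ v) :
    log ((1 + u * v) / (u + v)) ≤ (v - 1) / (v + 1) * log u := by
  set κ := (v - 1) / (v + 1)
  set g : ℝ → ℝ := fun t => κ * log t + log (t + v) - log (1 + t * v)
  have hderiv : ∀ t : ℝ, 0 < t → HasDerivAt g (κ * t⁻¹ + 1 / (t + v) - v / (1 + t * v)) t := by
    intro t ht
    have h1 := (hasDerivAt_log ht.ne').const_mul κ
    have h2 := ((hasDerivAt_id t).add_const v).log (by simp only [id_eq]; positivity)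
    have h3 := (((hasDerivAt_id t).mul_const v).const_add 1).log (by simp only [id_eq]; positivity)
    exact ((h1.add h2).sub h3).congr_deriv (by simp)
  have hmono : MonotoneOn g (Ici 1) := by
    refine monotoneOn_of_deriv_nonneg (convex_Ici 1)
      (fun t ht => (hderiv t (one_pos.trans_le ht)).continuousAt.continuousWithinAt)
      (fun t ht => ?_) (fun t ht => ?_) <;> rw [interior_Ici] at ht
    · exact (hderiv t (one_pos.trans ht)).differentiableAt.differentiableWithinAt
    · have ht0 : 0 < t := one_pos.trans ht
      rw [(hderiv t ht0).deriv]
      have key : κ * t⁻¹ + 1 / (t + v) - v / (1 + t * v)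
          = (v - 1) * v * (t - 1) ^ 2 / ((v + 1) * t * (t + v) * (1 + t * v)) := by
        simp only [κ]; field_simp; ring
      rw [key]
      positivity
  have := hmono (by simp) (by simpa using hu) hu
  simp only [g, log_one, mul_zero, zero_add, one_mul, sub_self] at this
  rw [log_div (by positivity) (by positivity)]
  linarith

/-- Birkhoff–Hopf contraction theorem: a matrix with strictly positive entries
contracts the Hilbert projective metric with ratio `κ(K)`:
`d_HP(Kx, Ky) ≤ κ(K) d_HP(x, y)` for all entrywise positive `x, y`. -/
theorem birkhoff_hopf_contraction {R1 R2 : ℕ} [Nonempty (Fin R1)] [Nonempty (Fin R2)]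
    (K : Matrix (Fin R1) (Fin R2) ℝ) (hK : ∀ i j, 0 < K i j)
    (x y : Fin R2 → ℝ) (hx : ∀ i, 0 < x i) (hy : ∀ i, 0 < y i) :
    dHP (K.mulVec x) (K.mulVec y) ≤ kappaK K * dHP x y := by
  obtain ⟨i₀, hi₀⟩ := Finite.exists_max fun k => x k / y k
  obtain ⟨j₀, hj₀⟩ := Finite.exists_min fun k => x k / y k
  set m := x j₀ / y j₀
  set u := √(x i₀ / y i₀ / m)
  set v := √(psiK K)
  have hm : 0 < m := div_pos (hx j₀) (hy j₀)
  have hu : 1 ≤ u := one_le_sqrt.2 ((one_le_div hm).2 (hi₀ j₀))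
  have hu2 : u ^ 2 = x i₀ / y i₀ / m := sq_sqrt (div_pos (div_pos (hx i₀) (hy i₀)) hm).le
  have hv : 1 ≤ v := one_le_sqrt.2 (one_le_psiK hK)
  have hv2 : v ^ 2 = psiK K := sq_sqrt (by linarith [one_le_psiK hK])
  have hκ : 0 ≤ kappaK K := div_nonneg (by linarith) (by linarith)
  have hpair := mulVec_mul_mulVec_le_of_bounds (fun i j => (hK i j).le)
    (fun i j k l => hv2 ▸ mul_le_psiK_mul hK i j k l) hu hv hm
    (fun k => (le_div_iff₀ (hy k)).1 (hj₀ k))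
    (fun k => by rw [hu2, mul_div_cancel₀ _ hm.ne']; exact (div_le_iff₀ (hy k)).1 (hi₀ k))
  calc dHP (K *ᵥ x) (K *ᵥ y) ≤ log (((1 + u * v) / (u + v)) ^ 2) :=
        dHP_le_log (mulVec_pos hK hx) (mulVec_pos hK hy) hpair
    _ = 2 * log ((1 + u * v) / (u + v)) := by rw [log_pow]; norm_num
    _ ≤ 2 * (kappaK K * log u) := by gcongr; exact log_one_add_mul_div_add_le hu hv
    _ = kappaK K * log (u ^ 2) := by rw [log_pow]; push_cast; ring
    _ ≤ kappaK K * dHP x y := by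
        gcongr
        rw [hu2, div_div_div_eq, mul_comm (y i₀)]
        exact log_ratio_le_dHP hx hy i₀ j₀
end
end
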